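/- Let G ≤ Aut(T) be a virtually super strongly fractal closed subgroup. Then the following are equivalent: (i) G is mixing; (ii) G has no proper projection-invariant open subgroup. -/

import Mathlib

open MeasureTheory

namespace ArbGal

/-- Vertices of the `d`-regular rooted tree: the free monoid on `{0, …, d-1}`. -/
abbrev V (d : ℕ) := List (Fin d)

instance (d : ℕ) : TopologicalSpace (V d) := ⊥

/-- A permutation of the vertices is an automorphism of the rooted tree iff it
preserves the level of vertices and the prefix (ancestor) relation. -/
def IsTreeAut {d : ℕ} (g : Equiv.Perm (V d)) : Prop :=
  (∀ v : V d, (g v).length = v.length) ∧ ∀ u v : V d, u <+: v → g u <+: g v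

/-- The automorphism group `Aut(T)` of the `d`-regular rooted tree, realized as a
subgroup of the permutation group of the set of vertices. -/
def treeAutGroup (d : ℕ) : Subgroup (Equiv.Perm (V d)) where
  carrier := {g | IsTreeAut g}
  one_mem' := ⟨fun _ => rfl, fun _ _ h => h⟩
  mul_mem' := by
    rintro a b ⟨ha1, ha2⟩ ⟨hb1, hb2⟩
    refine ⟨fun v => ?_, fun u v h => ?_⟩
    · simp only [Equiv.Perm.mul_apply, ha1, hb1]
    · simpa only [Equiv.Perm.mul_apply] using ha2 _ _ (hb2 _ _ h)
  inv_mem' := by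
    rintro g ⟨h1, h2⟩
    have hlen : ∀ v : V _, (g⁻¹ v).length = v.length := by
      intro v
      have := h1 (g⁻¹ v)
      rw [(Equiv.Perm.eq_inv_iff_eq.mp rfl)] at this
      exact this.symm
    refine ⟨hlen, fun u v huv => ?_⟩
    have h3 : (g⁻¹ v).take (g⁻¹ u).length <+: g⁻¹ v := List.take_prefix _ _
    have h4 : g ((g⁻¹ v).take (g⁻¹ u).length) <+: g (g⁻¹ v) := h2 _ _ h3
    rw [(Equiv.Perm.eq_inv_iff_eq.mp rfl)] at h4
    have hlen4 : (g ((g⁻¹ v).take (g⁻¹ u).length)).length = u.length := by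
      rw [h1, List.length_take, hlen, hlen]
      exact min_eq_left huv.length_le
    have h5 : g ((g⁻¹ v).take (g⁻¹ u).length) = u := by
      rcases List.prefix_or_prefix_of_prefix h4 huv with h | h
      · exact h.eq_of_length hlen4
      · exact (h.eq_of_length hlen4.symm).symm
    have h6 : (g⁻¹ v).take (g⁻¹ u).length = g⁻¹ u := by
      apply g.injective
      rw [h5, (Equiv.Perm.eq_inv_iff_eq.mp rfl)]
    rw [← h6]
    exact List.take_prefix _ _

/-- The group `Aut(T)`, as a type. -/
abbrev AutT (d : ℕ) := ↥(treeAutGroup d)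

/-- `Aut(T)` carries the congruence topology, i.e. the topology of pointwise
convergence on the (discrete) set of vertices. -/
instance (d : ℕ) : TopologicalSpace (Equiv.Perm (V d)) :=
  TopologicalSpace.induced (fun g => (g : V d → V d)) Pi.topologicalSpace

variable {d : ℕ}

lemma autT_len (g : AutT d) (v : V d) : ((g : Equiv.Perm (V d)) v).length = v.length := g.2.1 v

lemma autT_prefix (g : AutT d) {u v : V d} (h : u <+: v) :
    (g : Equiv.Perm (V d)) u <+: (g : Equiv.Perm (V d)) v := g.2.2 u v h

/-- The underlying function of the section `g|_v`. -/
def secFun (g : AutT d) (v w : V d) : V d := ((g : Equiv.Perm (V d)) (v ++ w)).drop v.length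

lemma sec_spec (g : AutT d) (v w : V d) :
    (g : Equiv.Perm (V d)) (v ++ w) = (g : Equiv.Perm (V d)) v ++ secFun g v w := by
  have h1 : (g : Equiv.Perm (V d)) v <+: (g : Equiv.Perm (V d)) (v ++ w) :=
    autT_prefix g (List.prefix_append v w)
  have h2 := autT_len g v
  have h3 : (g : Equiv.Perm (V d)) v = ((g : Equiv.Perm (V d)) (v ++ w)).take v.length := by
    rw [← h2]; exact List.prefix_iff_eq_take.mp h1
  conv_lhs => rw [← List.take_append_drop v.length ((g : Equiv.Perm (V d)) (v ++ w))]
  rw [← h3]; rfl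

lemma coe_inv (g : AutT d) : ((g⁻¹ : AutT d) : Equiv.Perm (V d)) = (g : Equiv.Perm (V d))⁻¹ := rfl

lemma sec_spec' (g : AutT d) (v w : V d) :
    (g : Equiv.Perm (V d)) (v ++ w)
      = (g : Equiv.Perm (V d)) v ++ List.drop v.length ((g : Equiv.Perm (V d)) (v ++ w)) :=
  sec_spec g v w

/-- The section (state) `g|_v` of a tree automorphism `g` at the vertex `v`; it is
the unique automorphism satisfying `g(v·w) = g(v)·(g|_v)(w)` for all `w`. -/
def sectionAt (g : AutT d) (v : V d) : AutT d :=
  ⟨{ toFun := secFun g v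
     invFun := secFun g⁻¹ ((g : Equiv.Perm (V d)) v)
     left_inv := by
       intro w
       show secFun g⁻¹ ((g : Equiv.Perm (V d)) v) (secFun g v w) = w
       unfold secFun
       rw [coe_inv, ← sec_spec' g v w, (Equiv.Perm.inv_eq_iff_eq.mpr rfl), autT_len, List.drop_left]
     right_inv := by
       intro w
       show secFun g v (secFun g⁻¹ ((g : Equiv.Perm (V d)) v) w) = w
       unfold secFun
       rw [coe_inv]
       have h := sec_spec' g⁻¹ ((g : Equiv.Perm (V d)) v) w
       rw [coe_inv, (Equiv.Perm.inv_eq_iff_eq.mpr rfl)] at h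
       rw [← h, (Equiv.Perm.eq_inv_iff_eq.mp rfl), ← autT_len g v, List.drop_left] },
   by
     constructor
     · intro w
       show (secFun g v w).length = w.length
       unfold secFun
       rw [List.length_drop, autT_len, List.length_append]
       omega
     · intro u w huw
       show secFun g v u <+: secFun g v w
       have h1 : v ++ u <+: v ++ w := by
         obtain ⟨c, rfl⟩ := huw
         rw [← List.append_assoc]
         exact List.prefix_append _ _
       have h2 := autT_prefix g h1
       rw [sec_spec g v u, sec_spec g v w] at h2
       obtain ⟨c, hc⟩ := h2
       rw [List.append_assoc] at hc
       exact ⟨c, List.append_cancel_left hc⟩⟩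

/-- The pointwise stabilizer `St(n)` of the `n`-th level, as a subgroup of `Aut(T)`. -/
def levelStab (d n : ℕ) : Subgroup (AutT d) where
  carrier := {g | ∀ v : V d, v.length = n → (g : Equiv.Perm (V d)) v = v}
  one_mem' := fun _ _ => rfl
  mul_mem' := by
    rintro a b ha hb v hv
    show (a : Equiv.Perm (V d)) ((b : Equiv.Perm (V d)) v) = v
    rw [hb v hv, ha v hv]
  inv_mem' := by
    intro g hg v hv
    show (g : Equiv.Perm (V d))⁻¹ v = v
    conv_lhs => rw [← hg v hv]
    exact Equiv.Perm.inv_eq_iff_eq.mpr rfl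

/-- Two automorphisms agree on the truncated tree `T^m` (have the same image
under `π_m`). -/
def truncEq (d : ℕ) (m : ℕ) (g h : AutT d) : Prop :=
  ∀ w : V d, w.length ≤ m → (g : Equiv.Perm (V d)) w = (h : Equiv.Perm (V d)) w

/-- `St_G(n)_v^m = π_m(G)`: the projection of the `n`-th level stabilizer of `G`
at the vertex `v`, truncated at depth `m`, coincides with `π_m(G)`. -/
def SectModEq (d : ℕ) (G : Subgroup (AutT d)) (n m : ℕ) (v : V d) : Prop :=
  ∀ a : AutT d,
    (∃ g, g ∈ G ∧ g ∈ levelStab d n ∧ (g : Equiv.Perm (V d)) v = v ∧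
        truncEq d m (sectionAt g v) a)
    ↔ (∃ b ∈ G, truncEq d m b a)

/-- `G` is self-similar: all sections of elements of `G` belong to `G`. -/
def SelfSimilar (d : ℕ) (G : Subgroup (AutT d)) : Prop :=
  ∀ g ∈ G, ∀ v : V d, sectionAt g v ∈ G

/-- `G` is level-transitive. -/
def LevelTrans (d : ℕ) (G : Subgroup (AutT d)) : Prop :=
  ∀ v w : V d, v.length = w.length → ∃ g ∈ G, (g : Equiv.Perm (V d)) v = w

/-- `G` is fractal: self-similar, level-transitive, and every projection
`G_v = φ_v(st_G(v))` is all of `G`. -/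
def Fractal (d : ℕ) (G : Subgroup (AutT d)) : Prop :=
  SelfSimilar d G ∧ LevelTrans d G ∧
    ∀ v : V d, ∀ h ∈ G, ∃ g ∈ G, (g : Equiv.Perm (V d)) v = v ∧ sectionAt g v = h

/-- For every `n ≥ 1`, the level stabilizer `St_G(n)` acts level-transitively on the
subtrees rooted at the vertices of level `n`. -/
def StabLevelTrans (d : ℕ) (G : Subgroup (AutT d)) : Prop :=
  ∀ n : ℕ, 1 ≤ n → ∀ v u w : V d, v.length = n → u.length = w.length →
    ∃ g ∈ G ⊓ levelStab d n, (g : Equiv.Perm (V d)) (v ++ u) = v ++ w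

/-- A fractal group `G ≤ Aut(T)` is mixing with delay constant `N`. -/
def MixingWithDelay (d : ℕ) (G : Subgroup (AutT d)) (N : ℕ) : Prop :=
  Fractal d G ∧ StabLevelTrans d G ∧
    ∀ m : ℕ, 1 ≤ m → ∀ n : ℕ, 1 ≤ n → ∀ v : V d, n + N ≤ v.length → SectModEq d G n m v

/-- A fractal group `G ≤ Aut(T)` is mixing: its level stabilizers act
level-transitively below their level, and for all `n, m ≥ 1` there is a delay
`N = N(m)` with `St_G(n)_v^m = π_m(G)` whenever `|v| ≥ n + N`. -/
def Mixing (d : ℕ) (G : Subgroup (AutT d)) : Prop :=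
  Fractal d G ∧ StabLevelTrans d G ∧
    ∀ m : ℕ, 1 ≤ m → ∃ N : ℕ,
      ∀ n : ℕ, 1 ≤ n → ∀ v : V d, n + N ≤ v.length → SectModEq d G n m v

/-- `g` fixes an end of the tree `T`, i.e. an infinite rooted path. -/
def FixesEnd (d : ℕ) (g : AutT d) : Prop :=
  ∃ ω : ℕ → Fin d, ∀ n : ℕ,
    (g : Equiv.Perm (V d)) (List.ofFn (fun i : Fin n => ω i)) = List.ofFn (fun i : Fin n => ω i)

/-- `X_n(g)`: the number of vertices of level `n` fixed by `g`. -/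
noncomputable def Xfix (d n : ℕ) (g : AutT d) : ℕ :=
  Set.ncard {w : Fin n → Fin d |
    (g : Equiv.Perm (V d)) (List.ofFn w) = List.ofFn w}

/-- The Borel σ-algebra on a closed subgroup of `Aut(T)`. -/
instance (d : ℕ) (G : Subgroup (AutT d)) : MeasurableSpace ↥G := borel ↥G

/-- The fixed-point process `{X_n}` of `G`, with respect to the measure `μ` on `G`,
is a martingale. -/
def FPMartingale (d : ℕ) (G : Subgroup (AutT d)) (μ : Measure ↥G) : Prop :=
  (∀ n : ℕ, 1 ≤ n → Integrable (fun g : ↥G => (Xfix d n (g : AutT d) : ℝ)) μ) ∧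
  ∀ n : ℕ, 1 ≤ n → ∀ t : ℕ → ℝ,
    μ {g : ↥G | ∀ i, 1 ≤ i → i ≤ n → (Xfix d i (g : AutT d) : ℝ) = t i} ≠ 0 →
    ∫ g in {g : ↥G | ∀ i, 1 ≤ i → i ≤ n → (Xfix d i (g : AutT d) : ℝ) = t i},
        (Xfix d (n + 1) (g : AutT d) : ℝ) ∂μ
      = t n * (μ {g : ↥G | ∀ i, 1 ≤ i → i ≤ n → (Xfix d i (g : AutT d) : ℝ) = t i}).toReal

/-- A subgroup `H ≤ Aut(T)` is projection-invariant if `H_v ≤ H` for every vertex `v`. -/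
def ProjInvariant (d : ℕ) (H : Subgroup (AutT d)) : Prop :=
  ∀ h ∈ H, ∀ v : V d, (h : Equiv.Perm (V d)) v = v → sectionAt h v ∈ H

/-- The subgroup `K_G = ⋂_{v ∈ γ} St_G(|v|)_v` (independent of the end `γ` for a
fractal group `G`), here realized as the intersection over all vertices. -/
def KGset (d : ℕ) (G : Subgroup (AutT d)) : Set (AutT d) :=
  {x | ∀ v : V d, ∃ g, g ∈ G ∧ g ∈ levelStab d v.length ∧ sectionAt g v = x}

/-- `G` is virtually super strongly fractal: `G` is fractal, `K_G` has finite index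
in `G`, and every level stabilizer `St_G(n)` acts level-transitively on the subtrees
rooted at level `n`. -/
def VirtSuperStronglyFractal (d : ℕ) (G : Subgroup (AutT d)) : Prop :=
  Fractal d G ∧ StabLevelTrans d G ∧
    ∃ S : Finset (AutT d), (↑S : Set (AutT d)) ⊆ (G : Set (AutT d)) ∧
      ∀ g ∈ G, ∃ s ∈ S, s⁻¹ * g ∈ KGset d G

/-!
If `G` is mixing and `H ≤ G` is open and projection-invariant, then `H ⊇ St_G(n)` for some `n`.
Given `b ∈ G`, mixing yields `g ∈ St_G(n)` fixing a deep vertex `v` with `g|_v ≡ b` modulo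
`St(n)`; projection invariance puts `g|_v` into `H`, and then `b ∈ g|_v St_G(n) ⊆ H`.

Conversely, consider the elements `b` such that for every depth `m` some delay `N` gives
`b ∈ π_m⁻¹(π_m(St_G(n)_v))` whenever `|v| ≥ n + N`. They form a subgroup, and inside `G` it is
projection-invariant: the section of `b` at `w` is controlled by looking `|w|` levels deeper, and
fractality lets one move between vertices of the same level. It contains `K_G`, so it has finite
index in `G`; it is an intersection of subgroups containing level stabilizers, so it is closed.
Hence it is open, so it is all of `G`. Finally, the condition at depth `m` only depends on `π_m(b)`,
which takes finitely many values, so one delay serves all of `G`.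
-/

open Filter Topology

theorem finiteIndex_of_finite_cover {K ι : Type*} [Group K] [Finite ι] (H : Subgroup K)
    (f : ι → K) (h : ∀ g, ∃ i, (f i)⁻¹ * g ∈ H) : H.FiniteIndex :=
  have : Finite (K ⧸ H) := Finite.of_surjective (fun i => (f i : K ⧸ H)) fun q =>
    q.inductionOn fun g => (h g).imp fun _ hi => QuotientGroup.eq.2 hi
  Subgroup.finiteIndex_of_finite_quotient

theorem exists_forall_of_finite_fibers {α ι : Type*} [Finite ι] (f : α → ι) {P : ℕ → α → Prop}
    (hmono : ∀ a, Monotone fun N => P N a) (hf : ∀ {N a b}, f a = f b → P N a → P N b)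
    (h : ∀ a, ∃ N, P N a) : ∃ N, ∀ a, P N a := by
  have hfib : ∀ i : Set.range f, ∀ᶠ N in atTop, ∀ b, f b = i → P N b := by
    rintro ⟨_, a, rfl⟩
    obtain ⟨N, hN⟩ := h a
    exact eventually_atTop.2 ⟨N, fun N' hN' b hb => hf hb.symm (hmono a hN' hN)⟩
  obtain ⟨N, hN⟩ := (eventually_all.2 hfib).exists
  exact ⟨N, fun a => hN ⟨f a, a, rfl⟩ a rfl⟩

lemma autT_ext {g h : AutT d}
    (H : ∀ v, (g : Equiv.Perm (V d)) v = (h : Equiv.Perm (V d)) v) : g = h :=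
  Subtype.ext (Equiv.ext H)

@[simp]
lemma autT_mul_apply (g h : AutT d) (v : V d) :
    ((g * h : AutT d) : Equiv.Perm (V d)) v = (g : Equiv.Perm (V d)) ((h : Equiv.Perm (V d)) v) :=
  rfl

@[simp]
lemma autT_one_apply (v : V d) : ((1 : AutT d) : Equiv.Perm (V d)) v = v := rfl

@[simp]
lemma autT_inv_apply_self (g : AutT d) (v : V d) :
    ((g⁻¹ : AutT d) : Equiv.Perm (V d)) ((g : Equiv.Perm (V d)) v) = v :=
  Equiv.symm_apply_apply _ v

@[simp]
lemma autT_apply_inv_self (g : AutT d) (v : V d) :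
    (g : Equiv.Perm (V d)) (((g⁻¹ : AutT d) : Equiv.Perm (V d)) v) = v :=
  Equiv.apply_symm_apply _ v

lemma sectionAt_apply (g : AutT d) (v w : V d) :
    ((sectionAt g v : AutT d) : Equiv.Perm (V d)) w
      = ((g : Equiv.Perm (V d)) (v ++ w)).drop v.length := rfl

@[simp]
lemma sectionAt_one (v : V d) : sectionAt (1 : AutT d) v = 1 :=
  autT_ext fun w => by rw [sectionAt_apply, autT_one_apply, autT_one_apply, List.drop_left]

lemma sectionAt_mul (g h : AutT d) (v : V d) :
    sectionAt (g * h) v = sectionAt g ((h : Equiv.Perm (V d)) v) * sectionAt h v :=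
  autT_ext fun w => by
    rw [sectionAt_apply, autT_mul_apply, autT_mul_apply, sectionAt_apply, sectionAt_apply,
      ← sec_spec' h v w, autT_len h v]

lemma sectionAt_inv (g : AutT d) (v : V d) :
    sectionAt g⁻¹ ((g : Equiv.Perm (V d)) v) = (sectionAt g v)⁻¹ := by
  have h := sectionAt_mul g⁻¹ g v
  rw [inv_mul_cancel, sectionAt_one] at h
  exact eq_inv_of_mul_eq_one_left h.symm

lemma sectionAt_append (g : AutT d) (v w : V d) :
    sectionAt g (v ++ w) = sectionAt (sectionAt g v) w :=
  autT_ext fun z => by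
    rw [sectionAt_apply, sectionAt_apply, sectionAt_apply, List.append_assoc,
      List.drop_drop, List.length_append]

lemma levelStab_fix_of_length_le (hd : 0 < d) {n : ℕ} {g : AutT d} (hg : g ∈ levelStab d n)
    {v : V d} (hv : v.length ≤ n) : (g : Equiv.Perm (V d)) v = v := by
  set v' : V d := v ++ List.replicate (n - v.length) ⟨0, hd⟩
  have hfix : (g : Equiv.Perm (V d)) v' = v' := hg v' (by simp [v']; omega)
  have hgv : (g : Equiv.Perm (V d)) v <+: v' := hfix ▸ autT_prefix g (List.prefix_append _ _)
  rw [List.prefix_iff_eq_take.mp hgv, autT_len, ← List.prefix_iff_eq_take.mp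
    (List.prefix_append _ _)]

lemma levelStab_antitone (hd : 0 < d) : Antitone (levelStab d) :=
  fun _ _ hnn' _ hg _ hv => levelStab_fix_of_length_le hd hg (hv ▸ hnn')

instance levelStab_normal (n : ℕ) : (levelStab d n).Normal :=
  ⟨fun g hg h v hv => by
    rw [autT_mul_apply, autT_mul_apply, hg _ ((autT_len h⁻¹ v).trans hv),
      autT_apply_inv_self]⟩

lemma truncEq_refl (m : ℕ) (g : AutT d) : truncEq d m g g := fun _ _ => rfl

lemma truncEq_trans {m : ℕ} {g h k : AutT d} (hgh : truncEq d m g h) (hhk : truncEq d m h k) :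
    truncEq d m g k := fun w hw => (hgh w hw).trans (hhk w hw)

/-- The restriction `π_m : Aut(T) → Aut(T^m)`, with `Aut(T^m)` realised inside the permutations
of the finitely many vertices of length at most `m`. -/
def truncHom (d m : ℕ) : AutT d →* Equiv.Perm {w : V d // w.length ≤ m} where
  toFun g := (g : Equiv.Perm (V d)).subtypePerm fun w => by rw [autT_len]
  map_one' := rfl
  map_mul' _ _ := rfl

instance (m : ℕ) : Finite {w : V d // w.length ≤ m} :=
  (List.finite_length_le (Fin d) m).to_subtype

lemma truncEq_iff_truncHom_eq {m : ℕ} {g h : AutT d} :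
    truncEq d m g h ↔ truncHom d m g = truncHom d m h :=
  ⟨fun H => Equiv.ext fun w => Subtype.ext (H w.1 w.2),
    fun H w hw => congrArg Subtype.val (Equiv.congr_fun H ⟨w, hw⟩)⟩

lemma truncEq_mul {m : ℕ} {x x' y y' : AutT d} (hx : truncEq d m x x') (hy : truncEq d m y y') :
    truncEq d m (x * y) (x' * y') := by
  rw [truncEq_iff_truncHom_eq] at hx hy ⊢
  rw [map_mul, map_mul, hx, hy]

lemma truncEq_inv {m : ℕ} {x y : AutT d} (hxy : truncEq d m x y) : truncEq d m x⁻¹ y⁻¹ := by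
  rw [truncEq_iff_truncHom_eq] at hxy ⊢
  rw [map_inv, map_inv, hxy]

lemma truncEq_sectionAt {m : ℕ} {x y : AutT d} (w : V d)
    (hxy : truncEq d (m + w.length) x y) : truncEq d m (sectionAt x w) (sectionAt y w) :=
  fun z hz => by rw [sectionAt_apply, sectionAt_apply, hxy (w ++ z) (by simp; omega)]

lemma inv_mul_mem_levelStab_of_truncEq {n : ℕ} {s b : AutT d} (h : truncEq d n s b) :
    s⁻¹ * b ∈ levelStab d n := fun v hv => by
  rw [autT_mul_apply, ← h v hv.le, autT_inv_apply_self]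

instance : DiscreteTopology (V d) := ⟨rfl⟩

lemma isInducing_coe_autT : Topology.IsInducing fun g : AutT d => ⇑(g : Equiv.Perm (V d)) :=
  (Topology.IsInducing.induced _).comp Topology.IsInducing.subtypeVal

lemma continuous_apply_autT (v : V d) : Continuous fun g : AutT d => (g : Equiv.Perm (V d)) v :=
  (continuous_apply v).comp isInducing_coe_autT.continuous

instance : SeparatelyContinuousMul (AutT d) where
  continuous_const_mul := isInducing_coe_autT.continuous_iff.2 <| continuous_pi fun w =>
    continuous_of_discreteTopology.comp (continuous_apply_autT (d := d) w)
  continuous_mul_const {s} := isInducing_coe_autT.continuous_iff.2 <| continuous_pi fun w =>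
    continuous_apply_autT ((s : Equiv.Perm (V d)) w)

lemma isOpen_levelStab (n : ℕ) : IsOpen (levelStab d n : Set (AutT d)) := by
  have hSt : (levelStab d n : Set (AutT d))
      = ⋂ v ∈ {v : V d | v.length = n}, (fun g : AutT d => (g : Equiv.Perm (V d)) v) ⁻¹' {v} := by
    ext g
    simp only [Set.mem_iInter, Set.mem_preimage, Set.mem_singleton_iff]
    rfl
  rw [hSt]
  exact (List.finite_length_eq (Fin d) n).isOpen_biInter fun v _ =>
    (isOpen_discrete {v}).preimage (continuous_apply_autT v)

lemma exists_levelStab_subset_of_mem_nhds (hd : 0 < d) {U : Set (AutT d)}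
    (hU : U ∈ 𝓝 (1 : AutT d)) : ∃ n, (levelStab d n : Set (AutT d)) ⊆ U := by
  rw [isInducing_coe_autT.nhds_eq_comap, Filter.mem_comap] at hU
  obtain ⟨t, ht, htU⟩ := hU
  rw [nhds_pi, Filter.mem_pi] at ht
  obtain ⟨I, hI, t', ht', hIt⟩ := ht
  obtain ⟨n, hn⟩ := (hI.image List.length).bddAbove
  refine ⟨n, fun g hg => htU (hIt fun v hv => ?_)⟩
  have hgv : (g : Equiv.Perm (V d)) v = v := levelStab_fix_of_length_le hd hg (hn ⟨v, hv, rfl⟩)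
  show (g : Equiv.Perm (V d)) v ∈ t' v
  rw [hgv]
  exact mem_of_mem_nhds (ht' v)

lemma exists_inf_levelStab_le_of_isOpen (hd : 0 < d) {G H : Subgroup (AutT d)}
    (hH : IsOpen (Subtype.val ⁻¹' (H : Set (AutT d)) : Set ↥G)) :
    ∃ n, 1 ≤ n ∧ G ⊓ levelStab d n ≤ H := by
  obtain ⟨U, hU, hUH⟩ := (mem_nhds_subtype _ _ _).1 (hH.mem_nhds (x := 1) H.one_mem)
  obtain ⟨n, hn⟩ := exists_levelStab_subset_of_mem_nhds hd hU
  refine ⟨n + 1, by omega, fun g ⟨hgG, hgSt⟩ => ?_⟩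
  exact hUH (a := ⟨g, hgG⟩) (hn (levelStab_antitone hd n.le_succ hgSt))

section Projections

/-- `π_m⁻¹(π_m(St_G(n)_v))`, the elements agreeing up to level `m` with a section at `v` of an
element of `St_G(n)` fixing `v`. -/
def levelStabProj (G : Subgroup (AutT d)) (n m : ℕ) (v : V d) : Subgroup (AutT d) where
  carrier := {a | ∃ g, g ∈ G ∧ g ∈ levelStab d n ∧ (g : Equiv.Perm (V d)) v = v ∧
    truncEq d m (sectionAt g v) a}
  one_mem' :=
    ⟨1, G.one_mem, (levelStab d n).one_mem, rfl, by rw [sectionAt_one]; exact truncEq_refl _ _⟩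
  mul_mem' := by
    rintro a b ⟨g, hgG, hgSt, hgv, hga⟩ ⟨k, hkG, hkSt, hkv, hkb⟩
    refine ⟨g * k, G.mul_mem hgG hkG, mul_mem hgSt hkSt, by rw [autT_mul_apply, hkv, hgv], ?_⟩
    rw [sectionAt_mul, hkv]
    exact truncEq_mul hga hkb
  inv_mem' := by
    rintro a ⟨g, hgG, hgSt, hgv, hga⟩
    have hsec := sectionAt_inv g v
    rw [hgv] at hsec
    refine ⟨g⁻¹, G.inv_mem hgG, inv_mem hgSt, by rw [← hgv, autT_inv_apply_self, hgv], ?_⟩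
    rw [hsec]
    exact truncEq_inv hga

variable {G : Subgroup (AutT d)}

lemma levelStab_le_levelStabProj (hd : 0 < d) (n m : ℕ) (v : V d) :
    levelStab d m ≤ levelStabProj G n m v := fun b hb =>
  ⟨1, G.one_mem, (levelStab d n).one_mem, rfl, fun w hw => by
    rw [sectionAt_one, autT_one_apply, levelStab_fix_of_length_le hd hb hw]⟩

lemma mem_levelStabProj_of_truncEq {n m : ℕ} {v : V d} {a b : AutT d}
    (ha : a ∈ levelStabProj G n m v) (hab : truncEq d m a b) : b ∈ levelStabProj G n m v :=
  let ⟨g, hgG, hgSt, hgv, hga⟩ := ha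
  ⟨g, hgG, hgSt, hgv, truncEq_trans hga hab⟩

lemma Fractal.exists_apply_eq_sectionAt_eq_one (hfr : Fractal d G) {v v' : V d}
    (hlen : v'.length = v.length) :
    ∃ h ∈ G, (h : Equiv.Perm (V d)) v' = v ∧ sectionAt h v' = 1 := by
  obtain ⟨hss, hlt, hsec⟩ := hfr
  obtain ⟨h₀, hh₀G, hh₀v⟩ := hlt v' v hlen
  obtain ⟨h₁, hh₁G, hh₁v, hh₁s⟩ := hsec v' (sectionAt h₀ v')⁻¹ (G.inv_mem (hss h₀ hh₀G v'))
  refine ⟨h₀ * h₁, G.mul_mem hh₀G hh₁G, by rw [autT_mul_apply, hh₁v, hh₀v], ?_⟩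
  rw [sectionAt_mul, hh₁v, hh₁s, mul_inv_cancel]

lemma sectionAt_conj {g h : AutT d} {v v' : V d} (hhv : (h : Equiv.Perm (V d)) v' = v)
    (hgv : (g : Equiv.Perm (V d)) v = v) (hh : sectionAt h v' = 1) :
    sectionAt (h⁻¹ * g * h) v' = sectionAt g v := by
  have hinv : sectionAt h⁻¹ v = 1 := by rw [← hhv, sectionAt_inv, hh, inv_one]
  rw [sectionAt_mul, hhv, sectionAt_mul, hgv, hinv, hh, one_mul, mul_one]

lemma levelStabProj_le_of_length_eq (hfr : Fractal d G) {n m : ℕ} {v v' : V d}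
    (hlen : v'.length = v.length) : levelStabProj G n m v ≤ levelStabProj G n m v' := by
  rintro a ⟨g, hgG, hgSt, hgv, hga⟩
  -- conjugate `g` by some `h ∈ G` with `h v' = v` and `h|_{v'} = 1`
  obtain ⟨h, hhG, hhv, hh⟩ := hfr.exists_apply_eq_sectionAt_eq_one hlen
  have hconj : h⁻¹ * g * h ∈ levelStab d n := by
    simpa only [inv_inv] using (levelStab_normal n).conj_mem g hgSt h⁻¹
  refine ⟨h⁻¹ * g * h, G.mul_mem (G.mul_mem (G.inv_mem hhG) hgG) hhG, hconj, ?_, ?_⟩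
  · rw [autT_mul_apply, autT_mul_apply, hhv, hgv, ← hhv, autT_inv_apply_self]
  · rw [sectionAt_conj hhv hgv hh]
    exact hga

lemma sectionAt_mem_levelStabProj (hd : 0 < d) {n m : ℕ} {u w : V d} {b : AutT d}
    (hbw : (b : Equiv.Perm (V d)) w = w)
    (hb : b ∈ levelStabProj G (n + w.length) (m + w.length) u) :
    sectionAt b w ∈ levelStabProj G n m (u ++ w) := by
  obtain ⟨g, hgG, hgSt, hgu, hgb⟩ := hb
  have hguw : (g : Equiv.Perm (V d)) (u ++ w) = u ++ w := by
    rw [sec_spec, hgu]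
    exact congrArg (u ++ ·) ((hgb w (by omega)).trans hbw)
  refine ⟨g, hgG, levelStab_antitone hd (n.le_add_right _) hgSt, hguw, ?_⟩
  rw [sectionAt_append]
  exact truncEq_sectionAt w hgb

end Projections

section Mixing

def delayedStabProj (G : Subgroup (AutT d)) (m N : ℕ) : Subgroup (AutT d) :=
  ⨅ (n : ℕ) (_ : 1 ≤ n) (v : V d) (_ : n + N ≤ v.length), levelStabProj G n m v

def mixingSubgroup (G : Subgroup (AutT d)) : Subgroup (AutT d) :=
  ⨅ m, ⨆ N, delayedStabProj G m N

variable {G : Subgroup (AutT d)}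

lemma mem_delayedStabProj {m N : ℕ} {a : AutT d} :
    a ∈ delayedStabProj G m N ↔
      ∀ n, 1 ≤ n → ∀ v : V d, n + N ≤ v.length → a ∈ levelStabProj G n m v := by
  simp only [delayedStabProj, Subgroup.mem_iInf]

lemma delayedStabProj_mono (m : ℕ) : Monotone (delayedStabProj G m) := fun _ _ hN _ ha =>
  mem_delayedStabProj.2 fun n hn v hv => mem_delayedStabProj.1 ha n hn v (by omega)

lemma mem_mixingSubgroup {a : AutT d} :
    a ∈ mixingSubgroup G ↔ ∀ m, ∃ N, a ∈ delayedStabProj G m N := by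
  simp only [mixingSubgroup, Subgroup.mem_iInf,
    Subgroup.mem_iSup_of_directed (delayedStabProj_mono _).directed_le]

lemma sectionAt_mem_delayedStabProj (hd : 0 < d) (hfr : Fractal d G) {m N : ℕ} {b : AutT d}
    {w : V d} (hbw : (b : Equiv.Perm (V d)) w = w)
    (hb : b ∈ delayedStabProj G (m + w.length) N) :
    sectionAt b w ∈ delayedStabProj G m (N + 2 * w.length) := by
  refine mem_delayedStabProj.2 fun n hn v hv => ?_
  set u : V d := List.replicate (v.length - w.length) ⟨0, hd⟩
  have hu : u.length = v.length - w.length := List.length_replicate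
  exact levelStabProj_le_of_length_eq hfr (by simp only [List.length_append]; omega)
    (sectionAt_mem_levelStabProj hd hbw (mem_delayedStabProj.1 hb _ (by omega) u (by omega)))

lemma isClosed_mixingSubgroup (hd : 0 < d) : IsClosed (mixingSubgroup G : Set (AutT d)) := by
  rw [mixingSubgroup, Subgroup.coe_iInf]
  refine isClosed_iInter fun m => Subgroup.isClosed_of_isOpen _ (Subgroup.isOpen_mono ?_
    (isOpen_levelStab m))
  refine le_trans ?_ (le_iSup _ 0)
  exact fun b hb => mem_delayedStabProj.2 fun n _ v _ => levelStab_le_levelStabProj hd n m v hb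

lemma KGset_subset_mixingSubgroup (hd : 0 < d) : KGset d G ⊆ mixingSubgroup G := fun b hb =>
  mem_mixingSubgroup.2 fun _ => ⟨0, mem_delayedStabProj.2 fun n _ v hv =>
    let ⟨g, hgG, hgSt, hgb⟩ := hb v
    ⟨g, hgG, levelStab_antitone hd (by omega) hgSt, hgSt v rfl, hgb ▸ truncEq_refl _ _⟩⟩

lemma projInvariant_inf_mixingSubgroup (hd : 0 < d) (hfr : Fractal d G) :
    ProjInvariant d (G ⊓ mixingSubgroup G) := by
  rintro b ⟨hbG, hb⟩ w hbw
  refine ⟨hfr.1 b hbG w, mem_mixingSubgroup.2 fun m => ?_⟩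
  obtain ⟨N, hN⟩ := mem_mixingSubgroup.1 hb (m + w.length)
  exact ⟨_, sectionAt_mem_delayedStabProj hd hfr hbw hN⟩

/-- `G ⊓ mixingSubgroup G` is closed in `G` and has finite index, as it contains `K_G`. -/
lemma isOpen_inf_mixingSubgroup (hd : 0 < d) (S : Finset (AutT d))
    (hSG : (S : Set (AutT d)) ⊆ G) (hS : ∀ g ∈ G, ∃ s ∈ S, s⁻¹ * g ∈ KGset d G) :
    IsOpen (Subtype.val ⁻¹' ((G ⊓ mixingSubgroup G : Subgroup (AutT d)) : Set (AutT d)) :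
      Set ↥G) := by
  change IsOpen (((G ⊓ mixingSubgroup G).subgroupOf G : Subgroup ↥G) : Set ↥G)
  rw [Subgroup.inf_subgroupOf_left]
  have : ((mixingSubgroup G).subgroupOf G).FiniteIndex :=
    finiteIndex_of_finite_cover _ (fun s : S => (⟨s, hSG s.2⟩ : ↥G)) fun g =>
      let ⟨s, hs, hsg⟩ := hS g g.2
      ⟨⟨s, hs⟩, KGset_subset_mixingSubgroup hd hsg⟩
  have : SeparatelyContinuousMul ↥G := G.toSubmonoid.separatelyContinuousMul
  exact Subgroup.isOpen_of_isClosed_of_finiteIndex _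
    ((isClosed_mixingSubgroup hd).preimage continuous_subtype_val)

lemma le_of_mixing (hd : 0 < d) (hmix : Mixing d G) {H : Subgroup (AutT d)}
    (hproj : ProjInvariant d H) (hHG : H ≤ G)
    (hH : IsOpen (Subtype.val ⁻¹' (H : Set (AutT d)) : Set ↥G)) : G ≤ H := by
  obtain ⟨n, hn, hnH⟩ := exists_inf_levelStab_le_of_isOpen hd hH
  obtain ⟨N, hN⟩ := hmix.2.2 n hn
  intro b hbG
  obtain ⟨g, hgG, hgSt, hgv, hgb⟩ :=
    (hN n hn (List.replicate (n + N) ⟨0, hd⟩) (by simp) b).2 ⟨b, hbG, truncEq_refl _ _⟩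
  have hgH : sectionAt g _ ∈ H := hproj g (hnH ⟨hgG, hgSt⟩) _ hgv
  have hrest : (sectionAt g _)⁻¹ * b ∈ H :=
    hnH ⟨G.mul_mem (G.inv_mem (hHG hgH)) hbG, inv_mul_mem_levelStab_of_truncEq hgb⟩
  simpa only [mul_inv_cancel_left] using H.mul_mem hgH hrest

lemma mixing_of_le_mixingSubgroup (hfr : Fractal d G) (hst : StabLevelTrans d G)
    (hG : G ≤ mixingSubgroup G) : Mixing d G := by
  refine ⟨hfr, hst, fun m _ => ?_⟩
  obtain ⟨N, hN⟩ := exists_forall_of_finite_fibers (fun b : ↥G => truncHom d m b)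
    (P := fun N b => (b : AutT d) ∈ delayedStabProj G m N)
    (fun _ _ _ hN hb => delayedStabProj_mono m hN hb)
    (fun hab ha => mem_delayedStabProj.2 fun n hn v hv =>
      mem_levelStabProj_of_truncEq (mem_delayedStabProj.1 ha n hn v hv)
        (truncEq_iff_truncHom_eq.2 hab))
    (fun b => mem_mixingSubgroup.1 (hG b.2) m)
  refine ⟨N, fun n hn v hv a => ⟨fun ⟨g, hgG, _, _, hga⟩ => ⟨_, hfr.1 g hgG v, hga⟩, ?_⟩⟩
  rintro ⟨b, hbG, hba⟩
  exact mem_levelStabProj_of_truncEq (mem_delayedStabProj.1 (hN ⟨b, hbG⟩) n hn v hv) hba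

end Mixing

theorem mixing_iff_no_proper_projInvariant_open_subgroup_general
    (d : ℕ) (hd : 2 ≤ d) (G : Subgroup (AutT d))
    (hvssf : VirtSuperStronglyFractal d G) :
    Mixing d G ↔
      ¬ ∃ H : Subgroup (AutT d), H ≤ G ∧ H ≠ G ∧ ProjInvariant d H ∧
          IsOpen (Subtype.val ⁻¹' (H : Set (AutT d)) : Set ↥G) := by
  obtain ⟨hfr, hst, S, hSG, hS⟩ := hvssf
  have hd0 : 0 < d := by omega
  constructor
  · rintro hmix ⟨H, hHG, hne, hproj, hH⟩
    exact hne (le_antisymm hHG (le_of_mixing hd0 hmix hproj hHG hH))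
  · intro hno
    refine mixing_of_le_mixingSubgroup hfr hst (inf_eq_left.1 ?_)
    by_contra hne
    exact hno ⟨_, inf_le_left, hne, projInvariant_inf_mixingSubgroup hd0 hfr,
      isOpen_inf_mixingSubgroup hd0 S hSG hS⟩

/-- Let `G ≤ Aut(T)` be a virtually super strongly fractal closed
subgroup.  Then `G` is mixing if and only if `G` has no proper projection-invariant
open subgroup. -/
theorem mixing_iff_no_proper_projInvariant_open_subgroup
    (d : ℕ) (hd : 2 ≤ d) (G : Subgroup (AutT d))
    (hclosed : IsClosed (G : Set (AutT d)))
    (hvssf : VirtSuperStronglyFractal d G) :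
    Mixing d G ↔
      ¬ ∃ H : Subgroup (AutT d), H ≤ G ∧ H ≠ G ∧ ProjInvariant d H ∧
          IsOpen (Subtype.val ⁻¹' (H : Set (AutT d)) : Set ↥G) :=
  mixing_iff_no_proper_projInvariant_open_subgroup_general d hd G hvssf

end ArbGal
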